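/- arXiv:1401.4623 — 2 statements merged into one kernel-verified Lean document; each statement's English description precedes it below -/
import Mathlib

section
/- Let G be a graph and write its magnitude as a formal power series |G|(q) = ∑_{n=0}^∞ c_n q^n over ℤ. Then c_0 = v(G), the number of vertices of G, and c_1 = −2·e(G), where e(G) is the number of edges of G. Equivalently, v(G) = |G|(0) and e(G) = −(1/2)·(d/dq)|G|(q) evaluated at q = 0. -/
open scoped Classical in
/-- `q ^ d` for an extended natural number `d`, with the convention `q ^ ∞ = 0`. -/
noncomputable def qExp (d : ℕ∞) : RatFunc ℚ :=
  if d = ⊤ then 0 else RatFunc.X ^ d.toNat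

/-- The matrix `Z_G(q)` whose `(x, y)` entry is `q ^ d(x, y)`. -/
noncomputable def magMatrix {V : Type*} [Fintype V] (G : SimpleGraph V) :
    Matrix V V (RatFunc ℚ) :=
  Matrix.of fun x y => qExp (G.edist x y)

/-- The magnitude of a graph: the sum of all entries of `Z_G(q)⁻¹`. -/
noncomputable def magnitude {V : Type*} [Fintype V] [DecidableEq V] (G : SimpleGraph V) :
    RatFunc ℚ :=
  ∑ x, ∑ y, (magMatrix G)⁻¹ x y

/-- The weighting of a graph: `w_G x` is the `x`-th row sum of `Z_G(q)⁻¹`. -/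
noncomputable def weighting {V : Type*} [Fintype V] [DecidableEq V] (G : SimpleGraph V)
    (x : V) : RatFunc ℚ :=
  ∑ y, (magMatrix G)⁻¹ x y

open scoped Classical

attribute [local instance] RatFunc.liftAlgebra

/-- Power series version of `qExp`. -/
noncomputable def pExp (d : ℕ∞) : PowerSeries ℚ :=
  if d = ⊤ then 0 else PowerSeries.X ^ d.toNat

/-- Power series version of `magMatrix`. -/
noncomputable def pMat {V : Type*} [Fintype V] (G : SimpleGraph V) :
    Matrix V V (PowerSeries ℚ) :=
  Matrix.of fun x y => pExp (G.edist x y)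

lemma coe_pExp (d : ℕ∞) :
    HahnSeries.ofPowerSeries ℤ ℚ (pExp d) = (algebraMap (RatFunc ℚ) (LaurentSeries ℚ)) (qExp d) := by
  unfold pExp qExp
  split_ifs with h
  · simp
  · rw [map_pow, map_pow, HahnSeries.ofPowerSeries_X]
    congr 1
    have := RatFunc.coe_X (F := ℚ)
    exact this.symm

lemma constantCoeff_pExp (d : ℕ∞) :
    PowerSeries.constantCoeff (R := ℚ) (pExp d) = if d = 0 then 1 else 0 := by
  unfold pExp
  split_ifs with h h0 h0
  · exact absurd (h0 ▸ h) (by simp)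
  · simp
  · rw [← PowerSeries.coeff_zero_eq_constantCoeff, PowerSeries.coeff_X_pow,
      if_pos (by simp [h0])]
  · rw [← PowerSeries.coeff_zero_eq_constantCoeff, PowerSeries.coeff_X_pow, if_neg]
    intro hc
    exact h0 (by simpa [h] using (ENat.toNat_eq_zero.mp hc.symm))

lemma coeff_one_pExp (d : ℕ∞) :
    PowerSeries.coeff (R := ℚ) 1 (pExp d) = if d = 1 then 1 else 0 := by
  unfold pExp
  split_ifs with h h1 h1
  · exact absurd (h1 ▸ h) (by simp)
  · simp
  · rw [PowerSeries.coeff_X_pow, if_pos (by simp [h1])]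
  · rw [PowerSeries.coeff_X_pow, if_neg]
    intro hc
    exact h1 ((ENat.toNat_eq_iff one_ne_zero).mp hc.symm)

lemma coeff_one_mul (a b : PowerSeries ℚ) :
    PowerSeries.coeff (R := ℚ) 1 (a * b) =
      PowerSeries.constantCoeff (R := ℚ) a * PowerSeries.coeff (R := ℚ) 1 b +
        PowerSeries.coeff (R := ℚ) 1 a * PowerSeries.constantCoeff (R := ℚ) b := by
  rw [PowerSeries.coeff_mul]
  rw [show (1 : ℕ) = 0 + 1 from rfl, Finset.Nat.antidiagonal_succ]
  rw [Finset.sum_cons, Finset.Nat.antidiagonal_zero, Finset.sum_map, Finset.sum_singleton]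
  simp [add_comm]

section Graph

variable {V : Type*} [Fintype V] [DecidableEq V] (G : SimpleGraph V)

lemma pMat_map_constantCoeff : (pMat G).map (PowerSeries.constantCoeff (R := ℚ)) = 1 := by
  ext x y
  rw [Matrix.map_apply, pMat, Matrix.of_apply, constantCoeff_pExp, Matrix.one_apply]
  by_cases h : x = y
  · rw [if_pos (SimpleGraph.edist_eq_zero_iff.mpr h), if_pos h]
  · rw [if_neg (fun hc => h (SimpleGraph.edist_eq_zero_iff.mp hc)), if_neg h]

lemma isUnit_det_pMat : IsUnit (pMat G).det := by
  rw [PowerSeries.isUnit_iff_constantCoeff]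
  have : (PowerSeries.constantCoeff (R := ℚ)) (pMat G).det = 1 := by
    rw [RingHom.map_det, RingHom.mapMatrix_apply, pMat_map_constantCoeff, Matrix.det_one]
  rw [this]
  exact isUnit_one

lemma pMat_inv_map_constantCoeff : (pMat G)⁻¹.map (PowerSeries.constantCoeff (R := ℚ)) = 1 := by
  have h := Matrix.nonsing_inv_mul (pMat G) (isUnit_det_pMat G)
  have := congrArg ((PowerSeries.constantCoeff (R := ℚ)).mapMatrix) h
  simpa [RingHom.mapMatrix_apply, Matrix.map_mul, pMat_map_constantCoeff,
    Matrix.map_one (PowerSeries.constantCoeff (R := ℚ)) (map_zero _) (map_one _)] using this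

lemma coeff_one_pMat_inv (x y : V) :
    PowerSeries.coeff (R := ℚ) 1 ((pMat G)⁻¹ x y) = if G.Adj x y then -1 else 0 := by
  have h := Matrix.nonsing_inv_mul (pMat G) (isUnit_det_pMat G)
  have hxy := congrFun (congrFun h x) y
  rw [Matrix.mul_apply] at hxy
  have hcoeff := congrArg (PowerSeries.coeff (R := ℚ) 1) hxy
  rw [map_sum] at hcoeff
  have hterm : ∀ k, PowerSeries.coeff (R := ℚ) 1 ((pMat G)⁻¹ x k * pMat G k y) =
      (if x = k then (if G.Adj k y then (1 : ℚ) else 0) else 0) +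
        (if k = y then PowerSeries.coeff (R := ℚ) 1 ((pMat G)⁻¹ x k) else 0) := by
    intro k
    have e1 : PowerSeries.constantCoeff (R := ℚ) ((pMat G)⁻¹ x k) = if x = k then 1 else 0 := by
      have := congrFun (congrFun (pMat_inv_map_constantCoeff G) x) k
      rw [Matrix.map_apply] at this
      rw [this, Matrix.one_apply]
    have e2 : PowerSeries.coeff (R := ℚ) 1 (pMat G k y) = if G.Adj k y then 1 else 0 := by
      show PowerSeries.coeff (R := ℚ) 1 (pExp (G.edist k y)) = _
      rw [coeff_one_pExp]
      simp only [SimpleGraph.edist_eq_one_iff_adj]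
    have e3 : PowerSeries.constantCoeff (R := ℚ) (pMat G k y) = if k = y then 1 else 0 := by
      show PowerSeries.constantCoeff (R := ℚ) (pExp (G.edist k y)) = _
      rw [constantCoeff_pExp]
      simp only [SimpleGraph.edist_eq_zero_iff]
    rw [coeff_one_mul, e1, e2, e3]
    split_ifs <;> ring
  rw [Finset.sum_congr rfl fun k _ => hterm k, Finset.sum_add_distrib,
    Fintype.sum_ite_eq, Fintype.sum_ite_eq'] at hcoeff
  have hone : PowerSeries.coeff (R := ℚ) 1 ((1 : Matrix V V (PowerSeries ℚ)) x y) = 0 := by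
    rw [Matrix.one_apply]
    split_ifs <;> simp [PowerSeries.coeff_one]
  rw [hone] at hcoeff
  split_ifs with hadj
  · rw [if_pos hadj] at hcoeff; linarith
  · rw [if_neg hadj] at hcoeff; linarith

lemma sum_adj_eq : ∑ x : V, ∑ y : V, (if G.Adj x y then (1 : ℚ) else 0) =
    2 * (Nat.card G.edgeSet : ℚ) := by
  have hdeg : ∀ x : V, ∑ y : V, (if G.Adj x y then (1 : ℚ) else 0) = (G.degree x : ℚ) := by
    intro x
    rw [Finset.sum_boole, SimpleGraph.degree, SimpleGraph.neighborFinset_eq_filter]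
  rw [Finset.sum_congr rfl fun x _ => hdeg x, ← Nat.cast_sum,
    SimpleGraph.sum_degrees_eq_twice_card_edges, Nat.cast_mul,
    SimpleGraph.edgeFinset_card, Nat.card_eq_fintype_card]
  norm_num

lemma magMatrix_map_coe :
    (magMatrix G).map (algebraMap (RatFunc ℚ) (LaurentSeries ℚ)) =
      (pMat G).map (HahnSeries.ofPowerSeries ℤ ℚ) := by
  refine Matrix.ext fun x y => ?_
  simp only [Matrix.map_apply, magMatrix, pMat, Matrix.of_apply]
  exact (coe_pExp _).symm

lemma magMatrix_inv_map_coe (x y : V) :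
    (algebraMap (RatFunc ℚ) (LaurentSeries ℚ)) ((magMatrix G)⁻¹ x y) =
      HahnSeries.ofPowerSeries ℤ ℚ ((pMat G)⁻¹ x y) := by
  set φ := (algebraMap (RatFunc ℚ) (LaurentSeries ℚ))
  set ψ := HahnSeries.ofPowerSeries ℤ ℚ
  -- magMatrix G has nonzero determinant
  have hdetψ : ψ (pMat G).det ≠ 0 := by
    intro h
    have := HahnSeries.ofPowerSeries_injective (h.trans (map_zero ψ).symm)
    have hc := congrArg (PowerSeries.constantCoeff (R := ℚ)) this
    rw [RingHom.map_det, RingHom.mapMatrix_apply, pMat_map_constantCoeff, Matrix.det_one,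
      map_zero] at hc
    exact one_ne_zero hc
  have hdet : (magMatrix G).det ≠ 0 := by
    intro h
    apply hdetψ
    have : ψ (pMat G).det = ((pMat G).map ψ).det := by
      rw [RingHom.map_det, RingHom.mapMatrix_apply]
    rw [this, ← magMatrix_map_coe, ← RingHom.mapMatrix_apply, ← RingHom.map_det, h, map_zero]
  -- map the identity Z * Z⁻¹ = 1
  have hZ : magMatrix G * (magMatrix G)⁻¹ = 1 :=
    Matrix.mul_nonsing_inv _ (isUnit_iff_ne_zero.mpr hdet)
  have hZmap : (magMatrix G).map φ * ((magMatrix G)⁻¹.map φ) = 1 := by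
    have := congrArg φ.mapMatrix hZ
    simpa [RingHom.mapMatrix_apply, Matrix.map_mul] using this
  have hPmap : (pMat G).map ψ * ((pMat G)⁻¹.map ψ) = 1 := by
    have := congrArg ψ.mapMatrix (Matrix.mul_nonsing_inv (pMat G) (isUnit_det_pMat G))
    simpa [RingHom.mapMatrix_apply, Matrix.map_mul] using this
  rw [magMatrix_map_coe] at hZmap
  have h1 : ((magMatrix G)⁻¹.map φ) = ((pMat G).map ψ)⁻¹ := (Matrix.inv_eq_right_inv hZmap).symm
  have h2 : ((pMat G)⁻¹.map ψ) = ((pMat G).map ψ)⁻¹ := (Matrix.inv_eq_right_inv hPmap).symm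
  have := h1.trans h2.symm
  exact congrFun (congrFun this x) y

end Graph

/-- Writing the magnitude of `G` as a power series `∑ cₙ qⁿ`, we have `c₀ = v(G)`
(the number of vertices) and `c₁ = -2 e(G)` (minus twice the number of edges). -/
theorem magnitude_coeff_zero_and_one
    {V : Type*} [Fintype V] [DecidableEq V] (G : SimpleGraph V) :
    ((magnitude G : LaurentSeries ℚ)).coeff 0 = (Fintype.card V : ℚ) ∧
    ((magnitude G : LaurentSeries ℚ)).coeff 1 = -2 * (Nat.card G.edgeSet : ℚ) := by
  set ψ := HahnSeries.ofPowerSeries ℤ ℚ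
  have hmag : (magnitude G : LaurentSeries ℚ) = ψ (∑ x, ∑ y, (pMat G)⁻¹ x y) := by
    show (algebraMap (RatFunc ℚ) (LaurentSeries ℚ)) (magnitude G) = _
    calc (algebraMap (RatFunc ℚ) (LaurentSeries ℚ)) (magnitude G)
        = ∑ x, ∑ y, ψ ((pMat G)⁻¹ x y) := by
          rw [magnitude, map_sum]
          refine Finset.sum_congr rfl fun x _ => ?_
          rw [map_sum]
          exact Finset.sum_congr rfl fun y _ => magMatrix_inv_map_coe G x y
      _ = ψ (∑ x, ∑ y, (pMat G)⁻¹ x y) := by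
          rw [map_sum]
          exact Finset.sum_congr rfl fun x _ => (map_sum ψ _ _).symm
  constructor
  · have h0 : (0 : ℤ) = ((0 : ℕ) : ℤ) := rfl
    rw [hmag, h0, HahnSeries.ofPowerSeries_apply_coeff, map_sum]
    have : ∀ x : V, PowerSeries.coeff (R := ℚ) 0 (∑ y, (pMat G)⁻¹ x y) =
        ∑ y, (if x = y then (1 : ℚ) else 0) := by
      intro x
      rw [map_sum]
      congr 1
      ext y
      rw [PowerSeries.coeff_zero_eq_constantCoeff]
      have := congrFun (congrFun (pMat_inv_map_constantCoeff G) x) y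
      rw [Matrix.map_apply] at this
      rw [this, Matrix.one_apply]
    rw [Finset.sum_congr rfl fun x _ => this x,
      Finset.sum_congr rfl fun x _ => Fintype.sum_ite_eq x (fun _ => (1 : ℚ))]
    simp [Finset.card_univ]
  · have h1 : (1 : ℤ) = ((1 : ℕ) : ℤ) := rfl
    rw [hmag, h1, HahnSeries.ofPowerSeries_apply_coeff, map_sum]
    have : ∀ x : V, PowerSeries.coeff (R := ℚ) 1 (∑ y, (pMat G)⁻¹ x y) =
        ∑ y, (if G.Adj x y then (-1 : ℚ) else 0) := by
      intro x
      rw [map_sum]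
      exact Finset.sum_congr rfl fun y _ => coeff_one_pMat_inv G x y
    rw [Finset.sum_congr rfl fun x _ => this x]
    have : ∑ x : V, ∑ y : V, (if G.Adj x y then (-1 : ℚ) else 0) =
        -(∑ x : V, ∑ y : V, (if G.Adj x y then (1 : ℚ) else 0)) := by
      rw [← Finset.sum_neg_distrib]
      congr 1
      ext x
      rw [← Finset.sum_neg_distrib]
      congr 1
      ext y
      split_ifs <;> simp
    rw [this, sum_adj_eq]
    ring
end

section
/- Let X be a graph and let U be a convex subgraph to which X projects, with projection map π : B → V(U), where B is the set of vertices of X connected to some vertex of U. Then for each vertex u of U, the weightings satisfy w_U(u) = ∑_{x ∈ B, π(x) = u} q^{d(u,x)} · w_X(x) in ℚ(q). -/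
/-- A subgraph `U` of `X` is convex in `X` if the shortest-path distance in `U` agrees with
the shortest-path distance in `X` between vertices of `U`. -/
def ConvexIn {V : Type*} {X : SimpleGraph V} (U : X.Subgraph) : Prop :=
  ∀ (u u' : V) (hu : u ∈ U.verts) (hu' : u' ∈ U.verts),
    U.coe.edist ⟨u, hu⟩ ⟨u', hu'⟩ = X.edist u u'

open scoped Classical

lemma qExp_top : qExp ⊤ = 0 := by simp [qExp]

lemma qExp_add (a b : ℕ∞) : qExp (a + b) = qExp a * qExp b := by
  rcases eq_or_ne a ⊤ with ha | ha
  · simp [ha, qExp_top, qExp]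
  rcases eq_or_ne b ⊤ with hb | hb
  · simp [hb, qExp_top, qExp]
  have hab : a + b ≠ ⊤ := WithTop.add_ne_top.mpr ⟨ha, hb⟩
  simp [qExp, ha, hb, hab, ENat.toNat_add ha hb, pow_add]

/-- Polynomial version of the magnitude matrix. -/
noncomputable def polyMag {V : Type*} [Fintype V] (G : SimpleGraph V) :
    Matrix V V (Polynomial ℚ) :=
  Matrix.of fun x y => if G.edist x y = ⊤ then 0 else Polynomial.X ^ (G.edist x y).toNat

lemma magMatrix_eq_map {V : Type*} [Fintype V] (G : SimpleGraph V) :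
    magMatrix G = (polyMag G).map (algebraMap (Polynomial ℚ) (RatFunc ℚ)) := by
  ext x y
  simp only [magMatrix, polyMag, Matrix.map_apply, Matrix.of_apply, qExp]
  split
  · simp
  · simp [RatFunc.algebraMap_X]

lemma magMatrix_det_isUnit {V : Type*} [Fintype V] [DecidableEq V] (G : SimpleGraph V) :
    IsUnit (magMatrix G).det := by
  have hpoly : Polynomial.eval 0 (polyMag G).det = 1 := by
    have : (Polynomial.evalRingHom (0 : ℚ)) (polyMag G).det
        = ((polyMag G).map (Polynomial.evalRingHom (0 : ℚ))).det :=
      RingHom.map_det _ _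
    have hid : (polyMag G).map (Polynomial.evalRingHom (0 : ℚ)) = 1 := by
      ext x y
      rcases eq_or_ne x y with rfl | hxy
      · simp [polyMag, Matrix.map_apply, SimpleGraph.edist_self]
      · have hne : G.edist x y ≠ 0 := fun h0 => hxy (SimpleGraph.edist_eq_zero_iff.mp h0)
        simp only [polyMag, Matrix.map_apply, Matrix.of_apply]
        split_ifs with h
        · simp [Matrix.one_apply_ne hxy]
        · have htn : (G.edist x y).toNat ≠ 0 := by
            simp [ENat.toNat_eq_zero, hne, h]
          simp [Matrix.one_apply_ne hxy, zero_pow htn]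
    rw [hid] at this
    simpa using this
  have hne : (polyMag G).det ≠ 0 := by
    intro h
    rw [h] at hpoly
    simp at hpoly
  have hdet : (magMatrix G).det = algebraMap (Polynomial ℚ) (RatFunc ℚ) (polyMag G).det := by
    rw [magMatrix_eq_map, ← RingHom.mapMatrix_apply, ← RingHom.map_det]
  rw [isUnit_iff_ne_zero, hdet]
  intro h
  apply hne
  apply RatFunc.algebraMap_injective ℚ
  rw [h, map_zero]

lemma weighting_eq_mulVec {V : Type*} [Fintype V] [DecidableEq V] (G : SimpleGraph V) :
    weighting G = (magMatrix G)⁻¹.mulVec (fun _ => 1) := by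
  funext x
  simp [weighting, Matrix.mulVec, dotProduct]

lemma mulVec_weighting {V : Type*} [Fintype V] [DecidableEq V] (G : SimpleGraph V) :
    (magMatrix G).mulVec (weighting G) = fun _ => 1 := by
  rw [weighting_eq_mulVec, Matrix.mulVec_mulVec,
    Matrix.mul_nonsing_inv _ (magMatrix_det_isUnit G), Matrix.one_mulVec]

lemma weighting_unique {V : Type*} [Fintype V] [DecidableEq V] (G : SimpleGraph V)
    (f : V → RatFunc ℚ) (hf : (magMatrix G).mulVec f = fun _ => 1) :
    f = weighting G := by
  have h1 : (magMatrix G)⁻¹.mulVec ((magMatrix G).mulVec f)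
      = (magMatrix G)⁻¹.mulVec (fun _ => 1) := by rw [hf]
  rw [Matrix.mulVec_mulVec, Matrix.nonsing_inv_mul _ (magMatrix_det_isUnit G),
    Matrix.one_mulVec, ← weighting_eq_mulVec] at h1
  exact h1

open scoped Classical in
/-- If `X` projects to a convex subgraph `U`, with projection `π`, then the weight of a
vertex `u` of `U` is `∑_{x ∈ π⁻¹(u)} q^{d(u,x)} w_X(x)`. -/
theorem weighting_of_projection
    {V : Type*} [Fintype V] [DecidableEq V] (X : SimpleGraph V) (U : X.Subgraph)
    (hconv : ConvexIn U)
    (π : V → V)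
    (hπmem : ∀ x : V, (∃ u ∈ U.verts, X.edist x u ≠ ⊤) → π x ∈ U.verts)
    (hπ : ∀ x : V, (∃ u ∈ U.verts, X.edist x u ≠ ⊤) →
      ∀ u ∈ U.verts, X.edist x u = X.edist x (π x) + X.edist (π x) u)
    (u : V) (hu : u ∈ U.verts) :
    weighting U.coe ⟨u, hu⟩ =
      ∑ x ∈ Finset.univ.filter
          (fun x : V => (∃ u' ∈ U.verts, X.edist x u' ≠ ⊤) ∧ π x = u),
        qExp (X.edist u x) * weighting X x := by
  set B : V → Prop := fun x => ∃ u' ∈ U.verts, X.edist x u' ≠ ⊤ with hB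
  set f : U.verts → RatFunc ℚ := fun w =>
    ∑ x ∈ Finset.univ.filter (fun x : V => B x ∧ π x = (w : V)),
      qExp (X.edist (w : V) x) * weighting X x with hf
  suffices h : f = weighting U.coe by
    exact (congrFun h ⟨u, hu⟩).symm
  apply weighting_unique
  funext v
  -- the projection-based fiber map
  have key : ∀ w : U.verts, magMatrix U.coe v w * f w =
      ∑ x ∈ Finset.univ.filter (fun x : V => B x ∧ π x = (w : V)),
        qExp (X.edist x (v : V)) * weighting X x := by
    intro w
    rw [hf, Finset.mul_sum]
    apply Finset.sum_congr rfl
    intro x hx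
    rw [Finset.mem_filter] at hx
    obtain ⟨-, hxB, hxπ⟩ := hx
    have hM : magMatrix U.coe v w = qExp (X.edist (v : V) (w : V)) := by
      show qExp (U.coe.edist v w) = _
      congr 1
      have := hconv (v : V) (w : V) v.2 w.2
      simpa using this
    rw [hM, ← mul_assoc, ← qExp_add]
    congr 2
    have hproj := hπ x hxB (v : V) v.2
    rw [hxπ] at hproj
    rw [hproj, add_comm]
    congr 1 <;> rw [SimpleGraph.edist_comm]
  rw [show ((magMatrix U.coe).mulVec f) v = ∑ w, magMatrix U.coe v w * f w from rfl]
  simp_rw [key]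
  -- fiber map
  have hvU : (v : V) ∈ U.verts := v.2
  set p : V → U.verts := fun x => if h : B x then ⟨π x, hπmem x h⟩ else v with hp
  have hfilter : ∀ w : U.verts,
      Finset.univ.filter (fun x : V => B x ∧ π x = (w : V)) =
      (Finset.univ.filter B).filter (fun x => p x = w) := by
    intro w
    ext x
    simp only [Finset.mem_filter, Finset.mem_univ, true_and, Finset.filter_filter]
    constructor
    · rintro ⟨hxB, hxπ⟩
      refine ⟨hxB, ?_⟩
      rw [hp]
      simp only [hxB, dif_pos]
      exact Subtype.ext hxπ
    · rintro ⟨hxB, hxp⟩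
      refine ⟨hxB, ?_⟩
      rw [hp] at hxp
      simp only [hxB, dif_pos] at hxp
      exact congrArg Subtype.val hxp
  simp_rw [hfilter]
  rw [Finset.sum_fiberwise (Finset.univ.filter B) p
    (fun x => qExp (X.edist x (v : V)) * weighting X x)]
  rw [Finset.sum_filter_of_ne (by
    intro x _ hne
    by_contra hxB
    apply hne
    have : X.edist x (v : V) = ⊤ := by
      by_contra hd
      exact hxB ⟨(v : V), hvU, hd⟩
    rw [this, qExp_top, zero_mul])]
  have := congrFun (mulVec_weighting X) (v : V)
  rw [show ((magMatrix X).mulVec (weighting X)) (v : V)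
      = ∑ x, magMatrix X (v : V) x * weighting X x from rfl] at this
  rw [← this]
  apply Finset.sum_congr rfl
  intro x _
  congr 1
  show qExp (X.edist x (v : V)) = qExp (X.edist (v : V) x)
  rw [SimpleGraph.edist_comm]
end
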